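/- The conjugated FROG Fourier coefficients satisfy conj(ŷ_{k,-m}) = (1/N) Σ_{ℓ=0}^{N-1} conj(x̂_ℓ) conj(x̂_{k-ℓ}) ω^{ℓm}; consequently the FROG trace of x at shift index m equals the FROG trace of the conjugate-reflected signal at shift index -m, so the FROG trace is invariant under m ↦ -m together with reflection. -/

import Mathlib

open Finset

/-- Discrete Fourier transform: `x̂_k = Σ_{n=0}^{N-1} x_n e^{-2πi k n / N}`. -/
noncomputable def dft (N : ℕ) [NeZero N] (x : ZMod N → ℂ) (k : ZMod N) : ℂ :=
  ∑ n : ZMod N, x n * Complex.exp (-(2 * Real.pi * Complex.I) * (k.val * n.val) / N)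

/-- `ŷ_{k,m} = (1/N) Σ_ℓ x̂_ℓ x̂_{k-ℓ} ω^{ℓ m}` with `ω = e^{2πi L/N}`, `m ∈ ℤ`. -/
noncomputable def yhat (N L : ℕ) [NeZero N] (x : ZMod N → ℂ) (k : ZMod N) (m : ℤ) : ℂ :=
  (1 / N) * ∑ ℓ : ZMod N, dft N x ℓ * dft N x (k - ℓ) *
    (Complex.exp (2 * Real.pi * Complex.I * L / N)) ^ ((ℓ.val : ℤ) * m)

noncomputable def zet (N : ℕ) : ℂ := Complex.exp (-(2 * Real.pi * Complex.I) / N)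

lemma zet_pow (N : ℕ) (a : ℕ) :
    zet N ^ a = Complex.exp (-(2 * Real.pi * Complex.I) * a / N) := by
  rw [zet, ← Complex.exp_nat_mul]; ring_nf

lemma zet_pow_N (N : ℕ) [NeZero N] : zet N ^ N = 1 := by
  rw [zet_pow]
  have hN : (N : ℂ) ≠ 0 := Nat.cast_ne_zero.mpr (NeZero.ne N)
  rw [mul_div_assoc, div_self hN, mul_one]
  have := Complex.exp_int_mul_two_pi_mul_I (-1)
  convert this using 2
  push_cast; ring

lemma zet_pow_mod (N : ℕ) [NeZero N] (a : ℕ) : zet N ^ a = zet N ^ (a % N) := by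
  conv_lhs => rw [← Nat.mod_add_div a N]
  rw [pow_add, pow_mul, zet_pow_N, one_pow, mul_one]

lemma dft_eq (N : ℕ) [NeZero N] (x : ZMod N → ℂ) (k : ZMod N) :
    dft N x k = ∑ n : ZMod N, x n * zet N ^ (k * n).val := by
  unfold dft
  refine Finset.sum_congr rfl fun n _ => ?_
  rw [ZMod.val_mul, ← zet_pow_mod, zet_pow]
  push_cast; ring_nf

lemma conj_zet (N : ℕ) : (starRingEnd ℂ) (zet N) = (zet N)⁻¹ := by
  rw [zet, ← Complex.exp_conj, ← Complex.exp_neg]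
  congr 1
  simp [map_div₀, Complex.conj_I, map_ofNat]
  ring

lemma conj_zet_pow (N : ℕ) (a : ℕ) :
    (starRingEnd ℂ) (zet N ^ a) = (zet N ^ a)⁻¹ := by
  rw [map_pow, conj_zet, inv_pow]

lemma zet_pow_neg_val (N : ℕ) [NeZero N] (a : ZMod N) :
    zet N ^ (-a).val = (zet N ^ a.val)⁻¹ := by
  refine eq_inv_of_mul_eq_one_left ?_
  rw [← pow_add]
  rcases eq_or_ne a 0 with h | h
  · simp [h]
  · rw [ZMod.neg_val, if_neg h, Nat.sub_add_cancel (le_of_lt (ZMod.val_lt a)), zet_pow_N]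

lemma dft_conj_refl (N : ℕ) [NeZero N] (x : ZMod N → ℂ) (k : ZMod N) :
    dft N (fun n => (starRingEnd ℂ) (x (-n))) k = (starRingEnd ℂ) (dft N x k) := by
  rw [dft_eq, dft_eq, map_sum]
  refine Fintype.sum_equiv (Equiv.neg (ZMod N)) _ _ fun n => ?_
  simp only [Equiv.neg_apply, map_mul]
  rw [conj_zet_pow, mul_neg, zet_pow_neg_val, inv_inv]

lemma conj_omega (N L : ℕ) :
    (starRingEnd ℂ) (Complex.exp (2 * Real.pi * Complex.I * L / N))
      = (Complex.exp (2 * Real.pi * Complex.I * L / N))⁻¹ := by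
  rw [← Complex.exp_conj, ← Complex.exp_neg]
  congr 1
  simp [map_div₀, Complex.conj_I, map_ofNat]
  ring

lemma part1 (N L : ℕ) [NeZero N] (x : ZMod N → ℂ) (k : ZMod N) (m : ℤ) :
    (starRingEnd ℂ) (yhat N L x k (-m))
      = (1 / N) * ∑ ℓ : ZMod N, (starRingEnd ℂ) (dft N x ℓ) *
          (starRingEnd ℂ) (dft N x (k - ℓ)) *
          (Complex.exp (2 * Real.pi * Complex.I * L / N)) ^ ((ℓ.val : ℤ) * m) := by
  rw [yhat, map_mul, map_sum]
  congr 1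
  · simp
  refine Finset.sum_congr rfl fun ℓ _ => ?_
  rw [map_mul, map_mul, map_zpow₀, conj_omega, inv_zpow, ← zpow_neg, mul_neg, neg_neg]

theorem stmt5 (N L : ℕ) [NeZero N] (hdvd : L ∣ N) (x : ZMod N → ℂ) :
    ∀ (k : ZMod N) (m : ℤ),
      ((starRingEnd ℂ) (yhat N L x k (-m))
          = (1 / N) * ∑ ℓ : ZMod N, (starRingEnd ℂ) (dft N x ℓ) *
              (starRingEnd ℂ) (dft N x (k - ℓ)) *
              (Complex.exp (2 * Real.pi * Complex.I * L / N)) ^ ((ℓ.val : ℤ) * m))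
      ∧ ‖yhat N L (fun n => (starRingEnd ℂ) (x (-n))) k (-m)‖
          = ‖yhat N L x k m‖ := by
  intro k m
  refine ⟨part1 N L x k m, ?_⟩
  have h2 : yhat N L (fun n => (starRingEnd ℂ) (x (-n))) k (-m)
      = (starRingEnd ℂ) (yhat N L x k m) := by
    have h := part1 N L x k (-m)
    rw [neg_neg] at h
    rw [h, yhat]
    congr 1
    refine Finset.sum_congr rfl fun ℓ _ => ?_
    rw [dft_conj_refl, dft_conj_refl]
  rw [h2, Complex.norm_conj]
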